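/- arXiv:2103.15942 — 2 statements merged into one kernel-verified Lean document; each statement's English description precedes it below -/
import Mathlib

section
/- The Laplace mechanism M(D) = f(D) + Lap(Δf/ε), where f is a real-valued function with global sensitivity Δf (i.e., |f(D) - f(D')| ≤ Δf for all neighboring D, D'), satisfies ε-differential privacy: for all neighboring D, D' and all measurable O, Pr[M(D) ∈ O] ≤ e^ε Pr[M(D') ∈ O]. -/
open MeasureTheory ProbabilityTheory Real

/-- Density of the mean-zero Laplace distribution with scale `b`. -/
noncomputable def laplaceDensity (b x : ℝ) : ℝ := (1 / (2 * b)) * Real.exp (-|x| / b)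

/-- The mean-zero Laplace distribution with scale `b`, as a measure on `ℝ`. -/
noncomputable def laplaceMeasure (b : ℝ) : Measure ℝ :=
  MeasureTheory.volume.withDensity (fun x => ENNReal.ofReal (laplaceDensity b x))

/-- `ε`-differential privacy for a mechanism `M` with respect to a
neighboring relation `N` on inputs. -/
def DP {X Ω : Type*} [MeasurableSpace Ω] (N : X → X → Prop) (ε : ℝ)
    (M : X → Measure Ω) : Prop :=
  ∀ x y, N x y → ∀ s : Set Ω, MeasurableSet s →
    M x s ≤ ENNReal.ofReal (Real.exp ε) * M y s

/-!
Translating `Lap(b)` by `c` gives the density `t ↦ p(t - c)`, and the triangle inequality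
`|t - c'| ≤ |t - c| + |c - c'|` in the exponent of `p(x) ∝ exp(-|x|/b)` bounds the two translates
against each other pointwise by the factor `exp(|c - c'|/b)`. Integrating over `O` and using
`|f D - f D'| / (Δ/ε) ≤ ε` gives the privacy bound.
-/

theorem map_const_add_withDensity {G : Type*} [MeasurableSpace G] [AddGroup G]
    [MeasurableAdd G] (μ : Measure G) [μ.IsAddLeftInvariant] (g : G → ENNReal) (c : G) :
    (μ.withDensity g).map (c + ·) = μ.withDensity (fun t => g (-c + t)) := by
  ext s hs
  rw [Measure.map_apply (measurable_const_add c) hs, withDensity_apply _ (hs.preimage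
    (measurable_const_add c)), withDensity_apply _ hs,
    ← (measurePreserving_add_left μ c).setLIntegral_comp_preimage_emb
      (measurableEmbedding_addLeft c) (fun t => g (-c + t))]
  simp only [neg_add_cancel_left]

theorem laplaceDensity_le_exp_mul {b : ℝ} (hb : 0 < b) (x y : ℝ) :
    laplaceDensity b x ≤ exp (|x - y| / b) * laplaceDensity b y := by
  rw [laplaceDensity, laplaceDensity, mul_left_comm, ← exp_add]
  gcongr
  rw [← add_div, div_le_div_iff_of_pos_right hb]
  linarith [abs_sub_abs_le_abs_sub y x, abs_sub_comm x y]

theorem map_const_add_laplaceMeasure_le {b : ℝ} (hb : 0 < b) (c c' : ℝ) :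
    (laplaceMeasure b).map (c + ·)
      ≤ ENNReal.ofReal (exp (|c - c'| / b)) • (laplaceMeasure b).map (c' + ·) := by
  rw [laplaceMeasure, map_const_add_withDensity, map_const_add_withDensity,
    ← withDensity_smul' _ _ ENNReal.ofReal_ne_top]
  refine withDensity_mono (ae_of_all _ fun t => ?_)
  rw [Pi.smul_apply, smul_eq_mul, ← ENNReal.ofReal_mul (exp_pos _).le]
  refine ENNReal.ofReal_le_ofReal ?_
  convert laplaceDensity_le_exp_mul hb (-c + t) (-c' + t) using 4
  rw [abs_sub_comm]
  congr 1
  ring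

/-- The Laplace mechanism `M(D) = f(D) + Lap(Δ/ε)` for a function `f` of global
sensitivity `Δ` is `ε`-differentially private. -/
theorem stmt_8 {X : Type*} (N : X → X → Prop) (f : X → ℝ) (Δ ε : ℝ)
    (hΔ : 0 < Δ) (hε : 0 < ε)
    (hsens : ∀ x y, N x y → |f x - f y| ≤ Δ) :
    DP N ε (fun x => (laplaceMeasure (Δ / ε)).map (fun z => f x + z)) := by
  intro x y hxy s _
  have hb : 0 < Δ / ε := div_pos hΔ hε
  have hratio : |f x - f y| / (Δ / ε) ≤ ε := by
    rw [div_le_iff₀ hb, mul_div_cancel₀ _ hε.ne']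
    exact hsens x y hxy
  calc (laplaceMeasure (Δ / ε)).map (f x + ·) s
      ≤ ENNReal.ofReal (exp (|f x - f y| / (Δ / ε))) * (laplaceMeasure (Δ / ε)).map (f y + ·) s :=
        map_const_add_laplaceMeasure_le hb (f x) (f y) s
    _ ≤ ENNReal.ofReal (exp ε) * (laplaceMeasure (Δ / ε)).map (f y + ·) s := by
        gcongr
end

section
/- Consider the Above-Noisy-Threshold (sparse vector) mechanism M on a stream of counts: sample θ̃ = θ + Lap(2/ε), and at each step i compute c_i (a running count of sensitivity 1 across neighboring streams) and v_i ~ Lap(4/ε); output ⊤ and halt the first time c_i + v_i ≥ θ̃, outputting ⊥ otherwise. Then M is ε-differentially private: for any output sequence O = (⊥,...,⊥,⊤) of length m and neighboring streams U, U', Pr[M(U) = O] ≤ e^ε Pr[M(U') = O]. -/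
open MeasureTheory ProbabilityTheory Real

/-!
The halting event is the preimage of a region `haltRegion θ c m` under the noise vector
`((W 0, W (m + 1)), (W 1, …, W m))`, whose law is the product of the two Laplace laws and the law
of the intermediate noises. Raising the threshold noise by `1` and the last noise by `2` maps the
region for `c` into the region for `c'`, since counts move by at most `1`. Translating `Lap(b)` by
`t` multiplies its density by at most `exp (|t| / b)`, so each of the two shifts costs
`exp (ε / 2)`.
-/

open scoped ENNReal

lemma laplaceDensity_sub_le {b : ℝ} (hb : 0 < b) (t x : ℝ) :
    laplaceDensity b (x - t) ≤ exp (|t| / b) * laplaceDensity b x := by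
  have habs : |x| - |t| ≤ |x - t| := abs_sub_abs_le_abs_sub x t
  calc laplaceDensity b (x - t) ≤ 1 / (2 * b) * exp (|t| / b + -|x| / b) := by
        unfold laplaceDensity
        gcongr
        rw [← add_div]
        gcongr
        linarith
    _ = exp (|t| / b) * laplaceDensity b x := by
        rw [exp_add, laplaceDensity]; ring

lemma measurable_laplaceDensity (b : ℝ) : Measurable (laplaceDensity b) := by
  unfold laplaceDensity
  fun_prop

instance (b : ℝ) : SFinite (laplaceMeasure b) := by
  unfold laplaceMeasure
  infer_instance

lemma laplaceMeasure_map_add_const_le {b : ℝ} (hb : 0 < b) (t : ℝ) :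
    (laplaceMeasure b).map (· + t) ≤ ENNReal.ofReal (exp (|t| / b)) • laplaceMeasure b := by
  refine Measure.le_iff.2 fun s hs => ?_
  have hdens : Measurable fun x => ENNReal.ofReal (laplaceDensity b x) :=
    ENNReal.measurable_ofReal.comp (measurable_laplaceDensity b)
  rw [Measure.map_apply (measurable_add_const t) hs, Measure.smul_apply, smul_eq_mul,
    laplaceMeasure, withDensity_apply _ (measurable_add_const t hs), withDensity_apply _ hs,
    ← lintegral_const_mul _ hdens]
  calc ∫⁻ x in (· + t) ⁻¹' s, ENNReal.ofReal (laplaceDensity b x)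
      = ∫⁻ y in s, ENNReal.ofReal (laplaceDensity b (y - t)) := by
        simpa using (measurePreserving_add_right volume t).setLIntegral_comp_preimage_emb
          (measurableEmbedding_addRight t) (fun y => ENNReal.ofReal (laplaceDensity b (y - t))) s
    _ ≤ ∫⁻ y in s, ENNReal.ofReal (exp (|t| / b)) * ENNReal.ofReal (laplaceDensity b y) := by
        gcongr with y
        rw [← ENNReal.ofReal_mul (exp_nonneg _)]
        exact ENNReal.ofReal_le_ofReal (laplaceDensity_sub_le hb t y)

lemma MeasureTheory.Measure.prod_le_smul_prod {α β : Type*} [MeasurableSpace α]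
    [MeasurableSpace β] {μ μ' : Measure α} {ν ν' : Measure β} [SFinite ν] {a b : ℝ≥0∞}
    (hμ : μ' ≤ a • μ) (hν : ν' ≤ b • ν) : μ'.prod ν' ≤ (a * b) • μ.prod ν :=
  calc μ'.prod ν' ≤ (a • μ).prod (b • ν) := Measure.prod_mono hμ hν
    _ = (a * b) • μ.prod ν := by
      rw [Measure.prod_smul_left, Measure.prod_smul_right, smul_smul]

lemma MeasureTheory.measure_le_mul_of_map_le_smul {α β : Type*} [MeasurableSpace α]
    [MeasurableSpace β] {μ : Measure α} {ν : Measure β} {T : α → β} {a : ℝ≥0∞} {s : Set α}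
    {t : Set β}
    (hT : Measurable T) (hμν : μ.map T ≤ a • ν) (hst : s ⊆ T ⁻¹' t) (ht : MeasurableSet t) :
    μ s ≤ a * ν t :=
  calc μ s ≤ μ (T ⁻¹' t) := measure_mono hst
    _ = μ.map T t := (Measure.map_apply hT ht).symm
    _ ≤ a * ν t := hμν t

namespace ProbabilityTheory

variable {Ω β : Type*} [MeasurableSpace Ω] [MeasurableSpace β] {μ : Measure Ω}
  {W : ℕ → Ω → β}

lemma iIndepFun.indepFun_pair_fin (hindep : iIndepFun W μ) (hmeas : ∀ n, Measurable (W n))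
    (m : ℕ) :
    IndepFun (fun ω => (W 0 ω, W (m + 1) ω)) (fun ω (i : Fin m) => W (i + 1) ω) μ := by
  have hdisj : Disjoint ({0, m + 1} : Finset ℕ) (Finset.Ioo 0 (m + 1)) := by
    simp [Finset.disjoint_left]
  have hfirst : (0 : ℕ) ∈ ({0, m + 1} : Finset ℕ) := by simp
  have hlast : m + 1 ∈ ({0, m + 1} : Finset ℕ) := by simp
  have hmid : ∀ i : Fin m, (i : ℕ) + 1 ∈ Finset.Ioo 0 (m + 1) := by simp
  exact (hindep.indepFun_finset _ _ hdisj hmeas).comp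
    ((measurable_pi_apply ⟨0, hfirst⟩).prodMk (measurable_pi_apply ⟨m + 1, hlast⟩))
    (measurable_pi_lambda (fun x (i : Fin m) => x ⟨(i : ℕ) + 1, hmid i⟩)
      fun _ => measurable_pi_apply _)

lemma iIndepFun.map_pair_fin_eq_prod [IsProbabilityMeasure μ] (hindep : iIndepFun W μ)
    (hmeas : ∀ n, Measurable (W n)) (m : ℕ) :
    μ.map (fun ω => ((W 0 ω, W (m + 1) ω), fun i : Fin m => W (i + 1) ω))
      = ((μ.map (W 0)).prod (μ.map (W (m + 1)))).prod
          (μ.map fun ω (i : Fin m) => W (i + 1) ω) := by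
  rw [IndepFun.map_prod_eq_prod_map_map ((hmeas 0).prodMk (hmeas _)).aemeasurable
      (measurable_pi_lambda _ fun _ => hmeas _).aemeasurable (hindep.indepFun_pair_fin hmeas m),
    IndepFun.map_prod_eq_prod_map_map (hmeas 0).aemeasurable (hmeas _).aemeasurable
      (hindep.indepFun (by omega : (0 : ℕ) ≠ m + 1))]

end ProbabilityTheory

/-- A point `((z, y), v)` stands for threshold noise `z`, noise `y` at step `m` and noises `v`
at the earlier steps. -/
def haltRegion (θ : ℝ) (c : ℕ → ℝ) (m : ℕ) : Set ((ℝ × ℝ) × (Fin m → ℝ)) :=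
  {p | (∀ i : Fin m, c i + p.2 i < θ + p.1.1) ∧ θ + p.1.1 ≤ c m + p.1.2}

lemma measurableSet_haltRegion (θ : ℝ) (c : ℕ → ℝ) (m : ℕ) :
    MeasurableSet (haltRegion θ c m) := by
  have hsplit : haltRegion θ c m = (⋂ i : Fin m, {p | c i + p.2 i < θ + p.1.1}) ∩
      {p | θ + p.1.1 ≤ c m + p.1.2} := by
    ext p
    simp [haltRegion]
  rw [hsplit]
  exact (MeasurableSet.iInter fun i => measurableSet_lt (by fun_prop) (by fun_prop)).inter
    (measurableSet_le (by fun_prop) (by fun_prop))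

lemma setOf_halt_eq_preimage_haltRegion {Ω : Type*} (θ : ℝ) (c : ℕ → ℝ) (m : ℕ)
    (W : ℕ → Ω → ℝ) :
    {ω | (∀ i < m, c i + W (i + 1) ω < θ + W 0 ω) ∧ θ + W 0 ω ≤ c m + W (m + 1) ω}
      = (fun ω => ((W 0 ω, W (m + 1) ω), fun i : Fin m => W (i + 1) ω)) ⁻¹'
          haltRegion θ c m := by
  ext ω
  simp [haltRegion, Fin.forall_iff]

lemma haltRegion_subset_preimage_shift {θ : ℝ} {c c' : ℕ → ℝ} (hcc' : ∀ i, |c i - c' i| ≤ 1)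
    (m : ℕ) :
    haltRegion θ c m ⊆ Prod.map (Prod.map (· + 1) (· + 2)) id ⁻¹' haltRegion θ c' m := by
  rintro ⟨⟨z, y⟩, v⟩ ⟨hbelow, habove⟩
  have hm := abs_le.1 (hcc' m)
  refine ⟨fun i => ?_, ?_⟩
  · have hi := abs_le.1 (hcc' i)
    have := hbelow i
    simp only [Prod.map_fst, Prod.map_snd, id] at this ⊢
    linarith
  · simp only [Prod.map_fst, Prod.map_snd] at habove ⊢
    linarith

lemma laplaceMeasure_prod_map_shift_le {γ : Type*} [MeasurableSpace γ] {ε : ℝ} (hε : 0 < ε)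
    (κ : Measure γ) [SFinite κ] :
    (((laplaceMeasure (2 / ε)).prod (laplaceMeasure (4 / ε))).prod κ).map
        (Prod.map (Prod.map (· + 1) (· + 2)) id)
      ≤ ENNReal.ofReal (exp ε) •
          ((laplaceMeasure (2 / ε)).prod (laplaceMeasure (4 / ε))).prod κ := by
  rw [← Measure.map_prod_map _ _ ((measurable_add_const 1).prodMap (measurable_add_const 2))
      measurable_id, ← Measure.map_prod_map _ _ (measurable_add_const 1) (measurable_add_const 2),
    Measure.map_id]
  have hthreshold := laplaceMeasure_map_add_const_le (b := 2 / ε) (by positivity) 1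
  have hlast := laplaceMeasure_map_add_const_le (b := 4 / ε) (by positivity) 2
  have hcost : ENNReal.ofReal (exp (|1| / (2 / ε))) * ENNReal.ofReal (exp (|2| / (4 / ε))) * 1
      = ENNReal.ofReal (exp ε) := by
    rw [mul_one, ← ENNReal.ofReal_mul (exp_nonneg _), ← exp_add]
    congr 2
    field_simp
    norm_num
  rw [← hcost]
  exact Measure.prod_le_smul_prod (Measure.prod_le_smul_prod hthreshold hlast)
    (one_smul ℝ≥0∞ κ).symm.le

/-- The Above-Noisy-Threshold (sparse vector) mechanism is `ε`-DP: for
neighboring streams of counts `c`, `c'` (with `|cᵢ - c'ᵢ| ≤ 1`), the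
probability of halting exactly at step `m` (outputting `⊥,…,⊥,⊤`) changes by
at most a factor `e^ε`.  Here `W 0` is the threshold noise `Lap(2/ε)` and
`W (i+1)` is the per-step noise `vᵢ ~ Lap(4/ε)`. -/
theorem stmt_12 {Ω : Type*} [MeasurableSpace Ω] (μ : Measure Ω) [IsProbabilityMeasure μ]
    (ε θ : ℝ) (hε : 0 < ε)
    (W : ℕ → Ω → ℝ) (hmeas : ∀ n, Measurable (W n))
    (hindep : iIndepFun W μ)
    (hlaw0 : μ.map (W 0) = laplaceMeasure (2 / ε))
    (hlaw : ∀ n, μ.map (W (n + 1)) = laplaceMeasure (4 / ε))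
    (c c' : ℕ → ℝ) (hneighbor : ∀ i, |c i - c' i| ≤ 1)
    (m : ℕ) :
    μ {ω | (∀ i < m, c i + W (i + 1) ω < θ + W 0 ω) ∧ θ + W 0 ω ≤ c m + W (m + 1) ω}
      ≤ ENNReal.ofReal (Real.exp ε) *
        μ {ω | (∀ i < m, c' i + W (i + 1) ω < θ + W 0 ω) ∧
            θ + W 0 ω ≤ c' m + W (m + 1) ω} := by
  have hnoise : Measurable fun ω => ((W 0 ω, W (m + 1) ω), fun i : Fin m => W (i + 1) ω) :=
    ((hmeas 0).prodMk (hmeas _)).prodMk (measurable_pi_lambda _ fun _ => hmeas _)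
  have hhalt : ∀ d : ℕ → ℝ,
      μ {ω | (∀ i < m, d i + W (i + 1) ω < θ + W 0 ω) ∧ θ + W 0 ω ≤ d m + W (m + 1) ω}
        = (((laplaceMeasure (2 / ε)).prod (laplaceMeasure (4 / ε))).prod
            (μ.map fun ω (i : Fin m) => W (i + 1) ω)) (haltRegion θ d m) := by
    intro d
    rw [setOf_halt_eq_preimage_haltRegion,
      ← Measure.map_apply hnoise (measurableSet_haltRegion ..),
      hindep.map_pair_fin_eq_prod hmeas m, hlaw0, hlaw m]
  rw [hhalt c, hhalt c']
  exact measure_le_mul_of_map_le_smul (by fun_prop) (laplaceMeasure_prod_map_shift_le hε _)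
    (haltRegion_subset_preimage_shift hneighbor m) (measurableSet_haltRegion ..)
end
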